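/- arXiv:1410.2109 — 5 statements merged into one kernel-verified Lean document; each statement's English description precedes it below -/
import Mathlib

section
/- For the multiplicative update θ_{n+1}(i) = θ_n(i)·(1 + γ_{n+1}·1_{i=J})/(1 + γ_{n+1}·θ_n(J)) with γ_{n+1} > 0, θ_n ∈ Θ, the relative change satisfies |1 − θ_n(i)/θ_{n+1}(i)| ≤ γ_{n+1} and |1 − θ_{n+1}(i)/θ_n(i)| ≤ γ_{n+1} for each i ∈ {1,…,d}. -/
/-!
Write `θ'` for the updated weight. If `i = J` the weight grows, `θ' = θ (1 + γ) / (1 + γ θ_J)`, and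
`θ' - θ = γ θ (1 - θ_J) / (1 + γ θ_J) ≤ γ θ`; otherwise it shrinks, `θ' = θ / (1 + γ θ_J)`, and
`θ - θ' = γ θ_J θ' ≤ γ θ'`. Either way `|θ' - θ| ≤ γ min(θ, θ')` because `0 ≤ θ_J ≤ 1`, and dividing by
`θ` or by `θ'` bounds both relative changes by `γ`.
-/

lemma abs_one_sub_div_le {a b γ : ℝ} (hb : 0 < b) (h : |a - b| ≤ γ * b) : |1 - a / b| ≤ γ := by
  have : 1 - a / b = -((a - b) / b) := by field_simp; ring
  rwa [this, abs_neg, abs_div, abs_of_pos hb, div_le_iff₀ hb]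

lemma abs_one_sub_div_le_of_abs_sub_le_mul_min {a b γ : ℝ} (hγ : 0 ≤ γ) (ha : 0 < a) (hb : 0 < b)
    (h : |a - b| ≤ γ * min a b) : |1 - a / b| ≤ γ ∧ |1 - b / a| ≤ γ :=
  ⟨abs_one_sub_div_le hb (h.trans (mul_le_mul_of_nonneg_left (min_le_right a b) hγ)),
    abs_one_sub_div_le ha (abs_sub_comm a b ▸ h.trans (mul_le_mul_of_nonneg_left (min_le_left a b) hγ))⟩

section MultiplicativeUpdate

variable {γ t x : ℝ} (hγ : 0 ≤ γ) (ht₀ : 0 ≤ t) (ht₁ : t ≤ 1) (hx : 0 < x)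
include hγ ht₀ ht₁ hx

lemma abs_mul_div_sub_self_le_mul_min :
    |x * (1 + γ) / (1 + γ * t) - x| ≤ γ * min x (x * (1 + γ) / (1 + γ * t)) := by
  have hden : 0 < 1 + γ * t := by positivity
  have hdiff : x * (1 + γ) / (1 + γ * t) - x = γ * x * ((1 - t) / (1 + γ * t)) := by
    field_simp; ring
  have hfrac : (1 - t) / (1 + γ * t) ≤ 1 := by
    rw [div_le_one hden]; nlinarith
  have hgrow : x ≤ x * (1 + γ) / (1 + γ * t) := by
    rw [le_div_iff₀ hden]; nlinarith [mul_nonneg hγ (sub_nonneg.2 ht₁)]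
  rw [min_eq_left hgrow, hdiff, abs_of_nonneg (by have := sub_nonneg.2 ht₁; positivity)]
  calc γ * x * ((1 - t) / (1 + γ * t)) ≤ γ * x * 1 := by gcongr
    _ = γ * x := mul_one _

lemma abs_div_sub_self_le_mul_min :
    |x / (1 + γ * t) - x| ≤ γ * min x (x / (1 + γ * t)) := by
  have hden : 0 < 1 + γ * t := by positivity
  have hdiff : x / (1 + γ * t) - x = -(γ * t * (x / (1 + γ * t))) := by
    field_simp; ring
  have hshrink : x / (1 + γ * t) ≤ x := div_le_self hx.le (by nlinarith)
  rw [min_eq_right hshrink, hdiff, abs_neg, abs_of_nonneg (by positivity)]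
  calc γ * t * (x / (1 + γ * t)) ≤ γ * 1 * (x / (1 + γ * t)) := by gcongr
    _ = γ * (x / (1 + γ * t)) := by rw [mul_one]

lemma abs_multiplicativeUpdate_sub_le_mul_min (p : Prop) [Decidable p] :
    |x * (1 + γ * (if p then 1 else 0)) / (1 + γ * t) - x| ≤
      γ * min x (x * (1 + γ * (if p then 1 else 0)) / (1 + γ * t)) := by
  split_ifs
  · simpa only [mul_one] using abs_mul_div_sub_self_le_mul_min hγ ht₀ ht₁ hx
  · simpa only [mul_zero, add_zero, mul_one] using abs_div_sub_self_le_mul_min hγ ht₀ ht₁ hx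

end MultiplicativeUpdate

/-- for the multiplicative update with stepsize `γ > 0`, the relative change
of each weight is at most `γ`. -/
theorem stmt_7 {d : ℕ} (γ : ℝ) (hγ : 0 < γ) (θ : Fin d → ℝ) (J : Fin d)
    (hθpos : ∀ i, 0 < θ i) (hθsum : ∑ i, θ i = 1) :
    ∀ i : Fin d,
      |1 - θ i / (θ i * (1 + γ * (if i = J then (1:ℝ) else 0)) / (1 + γ * θ J))| ≤ γ ∧
      |1 - (θ i * (1 + γ * (if i = J then (1:ℝ) else 0)) / (1 + γ * θ J)) / θ i| ≤ γ := by
  have hJ₁ : θ J ≤ 1 :=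
    hθsum ▸ Finset.single_le_sum (fun i _ => (hθpos i).le) (Finset.mem_univ J)
  intro i
  have hupdate : 0 < θ i * (1 + γ * (if i = J then (1:ℝ) else 0)) / (1 + γ * θ J) := by
    have := hθpos J; have := hθpos i; split_ifs <;> positivity
  have hclose := abs_multiplicativeUpdate_sub_le_mul_min hγ.le (hθpos J).le hJ₁ (hθpos i) (i = J)
  rw [abs_sub_comm] at hclose
  exact abs_one_sub_div_le_of_abs_sub_le_mul_min hγ.le (hθpos i) hupdate hclose
end

section
/- With V(θ) = −Σ_i θ⋆(i)·ln(θ(i)/θ⋆(i)) and mean field h(θ) = (θ⋆ − θ)/Σ_i(θ⋆(i)/θ(i)), the inner product ⟨∇V(θ), h(θ)⟩ is ≤ 0 for all θ in the open simplex Θ, with equality if and only if θ = θ⋆. -/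
/-! Since `∑ θ⋆ = ∑ θ`, the numerator `∑ᵢ (-θ⋆ᵢ/θᵢ)(θ⋆ᵢ - θᵢ)` equals minus Pearson's χ²
divergence `∑ᵢ (θ⋆ᵢ - θᵢ)²/θᵢ`, while the normaliser `∑ⱼ θ⋆ⱼ/θⱼ` is positive. -/

open Finset

section ChiSq

variable {ι : Type*} [Fintype ι]

/-- Pearson's χ² divergence of `p` from `q`. -/
noncomputable def chiSqDiv (p q : ι → ℝ) : ℝ :=
  ∑ i, (p i - q i) ^ 2 / q i

theorem chiSqDiv_nonneg (p : ι → ℝ) {q : ι → ℝ} (hq : ∀ i, 0 < q i) :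
    0 ≤ chiSqDiv p q :=
  sum_nonneg fun i _ => div_nonneg (sq_nonneg _) (hq i).le

theorem chiSqDiv_eq_zero_iff {p q : ι → ℝ} (hq : ∀ i, 0 < q i) :
    chiSqDiv p q = 0 ↔ p = q := by
  rw [chiSqDiv, sum_eq_zero_iff_of_nonneg fun i _ => div_nonneg (sq_nonneg _) (hq i).le,
    funext_iff]
  simp only [mem_univ, true_implies, div_eq_zero_iff, (hq _).ne', or_false,
    sq_eq_zero_iff, sub_eq_zero]

theorem sum_neg_div_mul_sub_eq_neg_chiSqDiv {p q : ι → ℝ} (hq : ∀ i, q i ≠ 0)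
    (hsum : ∑ i, p i = ∑ i, q i) :
    ∑ i, (-(p i) / q i) * (p i - q i) = -chiSqDiv p q := by
  have hterm : ∀ i, (-(p i) / q i) * (p i - q i) = -((p i - q i) ^ 2 / q i) - (p i - q i) := by
    intro i
    field_simp [hq i]
    ring
  simp only [hterm, sum_sub_distrib, sum_neg_distrib, hsum, sub_self, sub_zero, chiSqDiv]

end ChiSq

/-- with `∇V(θ)_i = -θ⋆ i / θ i` and
`h(θ) = (θ⋆ - θ) / ∑ j, θ⋆ j / θ j`, one has `⟨∇V(θ), h(θ)⟩ ≤ 0`, with equality iff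
`θ = θ⋆`. -/
theorem stmt_9 {d : ℕ} (θstar θ : Fin d → ℝ)
    (hθstarpos : ∀ i, 0 < θstar i) (hθstarsum : ∑ i, θstar i = 1)
    (hθpos : ∀ i, 0 < θ i) (hθsum : ∑ i, θ i = 1) :
    (∑ i, (-(θstar i) / θ i) * ((θstar i - θ i) / ∑ j, θstar j / θ j)) ≤ 0 ∧
    ((∑ i, (-(θstar i) / θ i) * ((θstar i - θ i) / ∑ j, θstar j / θ j)) = 0 ↔
      θ = θstar) := by
  have hne : (univ : Finset (Fin d)).Nonempty := nonempty_of_sum_ne_zero (f := θ) (by simp [hθsum])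
  have hS : 0 < ∑ j, θstar j / θ j := sum_pos (fun j _ => div_pos (hθstarpos j) (hθpos j)) hne
  have hinner : ∑ i, (-(θstar i) / θ i) * ((θstar i - θ i) / ∑ j, θstar j / θ j)
      = -chiSqDiv θstar θ / ∑ j, θstar j / θ j := by
    simp only [← mul_div_assoc, ← sum_div]
    rw [sum_neg_div_mul_sub_eq_neg_chiSqDiv (fun i => (hθpos i).ne') (hθstarsum.trans hθsum.symm)]
  rw [hinner, div_eq_zero_iff, neg_eq_zero, chiSqDiv_eq_zero_iff hθpos, eq_comm]
  exact ⟨div_nonpos_of_nonpos_of_nonneg (neg_nonpos.2 (chiSqDiv_nonneg θstar hθpos)) hS.le,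
    by simp [hS.ne']⟩
end

section
/- Let (T_k)_{k≥0} be ℕ-valued random variables with T_0 = 0 such that P(T_{k+1} − T_k > m·d | F_{T_k}) ≤ (1−p)^m for all k, m ∈ ℕ, where p ∈ (0,1) and d ≥ 1. Then almost surely limsup_{k→∞} T_k/k ≤ d/p; in particular, almost surely there exists a finite C_T with T_k ≤ C_T·k for all k. -/
/-!
Chernoff bound and Borel–Cantelli. The tail hypothesis says that, given `F_{T_k}`, the
increment `T_{k+1} - T_k` is dominated by `d` times a geometric variable of parameter `p`;
summing the tails against `e^{l x}` gives `E[e^{l T_{k+1}} | F_{T_k}] ≤ e^{l T_k} φ(e^{l d})`,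
where `φ(r) = p r / (1 - (1 - p) r)` is the generating function of the geometric law, hence
`E e^{l T_k} ≤ φ(e^{l d})^k`. For `a > d / p` the function `l ↦ e^{-l a} φ(e^{l d})` equals `1`
at `l = 0` with derivative `d / p - a < 0`, so for small `l > 0` Markov's inequality makes
`P(T_k > a k)` decay geometrically, and Borel–Cantelli gives `T_k ≤ a k` eventually, a.s.
-/

open MeasureTheory Filter Topology
open scoped ENNReal

theorem exists_pos_mul_exp_add_mul_exp_lt_one {p d a : ℝ} (h : d < p * a) :
    ∃ l > 0, p * Real.exp (l * (d - a)) + (1 - p) * Real.exp (l * d) < 1 := by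
  set f : ℝ → ℝ := fun l => p * Real.exp (l * (d - a)) + (1 - p) * Real.exp (l * d)
  have hf0 : f 0 = 1 := by simp [f]
  have hf : HasDerivAt f (d - p * a) 0 :=
    ((((hasDerivAt_id (0:ℝ)).mul_const (d - a)).exp.const_mul p).add
      (((hasDerivAt_id (0:ℝ)).mul_const d).exp.const_mul (1 - p))).congr_deriv (by simp; ring)
  have hslope : ∀ᶠ l in 𝓝[>] 0, l⁻¹ • (f (0 + l) - f 0) < 0 :=
    hf.tendsto_slope_zero_right.eventually (gt_mem_nhds (sub_neg.2 h))
  obtain ⟨l, hl, hpos⟩ := (hslope.and self_mem_nhdsWithin).exists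
  rw [zero_add, hf0, smul_eq_mul, mul_neg_iff] at hl
  refine ⟨l, hpos, ?_⟩
  rcases hl with ⟨-, hl⟩ | ⟨hl, -⟩
  · exact sub_neg.1 hl
  · exact absurd hl (inv_pos.2 hpos).not_gt

/-- With `r = e^{l d}`: `e^{l x} ≤ r ^ ⌈x / d⌉ = 1 + ∑_{n < ⌈x / d⌉} (r - 1) r ^ n`, and
`n < ⌈x / d⌉ ↔ n d < x`. -/
theorem ofReal_exp_mul_le_one_add_tsum {l : ℝ} (hl : 0 ≤ l) {d : ℕ} (hd : 0 < d) (x : ℕ) :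
    ENNReal.ofReal (Real.exp (l * x)) ≤ 1 + ∑' n : ℕ,
      if n * d < x then ENNReal.ofReal ((Real.exp (l * d) - 1) * Real.exp (l * d) ^ n)
      else 0 := by
  set r := Real.exp (l * d)
  set j := x ⌈/⌉ d
  have hx : x ≤ d * j := le_smul_ceilDiv hd
  have hlt : ∀ n, n * d < x ↔ n < j := fun n => by
    rw [← not_le, ← not_le, ceilDiv_le_iff_le_mul hd, mul_comm]
  have hr : 1 ≤ r := Real.one_le_exp (by positivity)
  calc ENNReal.ofReal (Real.exp (l * x)) ≤ ENNReal.ofReal (r ^ j) := by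
        refine ENNReal.ofReal_le_ofReal ?_
        rw [← Real.exp_nat_mul, Real.exp_le_exp]
        have : (x : ℝ) ≤ d * j := by exact_mod_cast hx
        nlinarith
    _ = ENNReal.ofReal (1 + ∑ n ∈ Finset.range j, (r - 1) * r ^ n) := by
        rw [← Finset.mul_sum, mul_comm, geom_sum_mul, add_sub_cancel]
    _ = 1 + ∑ n ∈ Finset.range j, ENNReal.ofReal ((r - 1) * r ^ n) := by
        rw [ENNReal.ofReal_add zero_le_one (Finset.sum_nonneg fun n _ => by positivity),
          ENNReal.ofReal_one, ENNReal.ofReal_sum_of_nonneg fun n _ => by positivity]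
    _ = _ := by
        rw [tsum_eq_sum (s := Finset.range j) fun n hn => by simp_all]
        exact congrArg _ (Finset.sum_congr rfl fun n hn => by
          rw [if_pos ((hlt n).2 (Finset.mem_range.1 hn))])

theorem one_add_tsum_ofReal_mul_pow_eq {r p : ℝ} (hr : 1 ≤ r) (hp : p ≤ 1)
    (hq : (1 - p) * r < 1) :
    1 + ∑' n : ℕ, ENNReal.ofReal ((r - 1) * r ^ n) * ENNReal.ofReal ((1 - p) ^ n) =
      ENNReal.ofReal (p * r / (1 - (1 - p) * r)) := by
  set q := (1 - p) * r
  have hq0 : 0 ≤ q := mul_nonneg (by linarith) (by linarith)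
  have hq1 : 0 < 1 - q := by linarith
  have hsum : ∑' n : ℕ, ENNReal.ofReal ((r - 1) * r ^ n) * ENNReal.ofReal ((1 - p) ^ n) =
      ENNReal.ofReal ((r - 1) / (1 - q)) := by
    rw [div_eq_mul_inv, ← tsum_geometric_of_lt_one hq0 hq, ← tsum_mul_left,
      ENNReal.ofReal_tsum_of_nonneg (fun n => by positivity)
        ((summable_geometric_of_lt_one hq0 hq).mul_left _)]
    refine tsum_congr fun n => ?_
    rw [← ENNReal.ofReal_mul (by positivity), mul_pow]
    ring_nf
  rw [hsum, ← ENNReal.ofReal_one, ← ENNReal.ofReal_add zero_le_one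
    (div_nonneg (by linarith) hq1.le)]
  congr 1
  rw [eq_div_iff hq1.ne', add_mul, div_mul_cancel₀ _ hq1.ne']
  ring

theorem limsup_div_le_of_forall_lt_eventually_le {u : ℕ → ℝ} (hu : ∀ k, 0 ≤ u k) {c : ℝ}
    (h : ∀ a, c < a → ∀ᶠ k in atTop, u k ≤ a * k) :
    limsup (fun k => u k / k) atTop ≤ c :=
  le_of_forall_gt_imp_ge_of_dense fun a ha =>
    limsup_le_of_le (isCoboundedUnder_le_of_le atTop fun k => div_nonneg (hu k) k.cast_nonneg)
      ((h a ha).mp ((eventually_gt_atTop 0).mono fun k hk hle =>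
        (div_le_iff₀ (by positivity)).2 hle))

theorem exists_forall_le_mul_of_eventually_le {u : ℕ → ℝ} (h0 : u 0 ≤ 0) {a : ℝ}
    (h : ∀ᶠ k in atTop, u k ≤ a * k) : ∃ C, ∀ k : ℕ, u k ≤ C * k := by
  obtain ⟨C, hC⟩ : BddAbove (Set.range fun k : ℕ => u k / k) :=
    IsBoundedUnder.bddAbove_range ⟨a, eventually_map.2 (h.mp ((eventually_gt_atTop 0).mono
      fun k hk hle => (div_le_iff₀ (by positivity)).2 hle))⟩
  refine ⟨C, fun k => ?_⟩
  rcases k.eq_zero_or_pos with rfl | hk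
  · simpa using h0
  · exact (div_le_iff₀ (by positivity)).1 (hC ⟨k, rfl⟩)

namespace MeasureTheory

variable {Ω : Type*} {m m0 : MeasurableSpace Ω} {μ : Measure Ω}

theorem restrict_trim_le_smul_trim_of_condExp_indicator_le [IsFiniteMeasure μ] (hm : m ≤ m0)
    {A : Set Ω} (hA : MeasurableSet A) {b : ℝ}
    (hb : ∀ᵐ ω ∂μ, (μ[A.indicator (fun _ => (1:ℝ)) | m]) ω ≤ b) :
    (μ.restrict A).trim hm ≤ ENNReal.ofReal b • μ.trim hm := by
  refine Measure.le_iff.2 fun B hB => ?_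
  have hint : Integrable (A.indicator fun _ => (1:ℝ)) μ := (integrable_const 1).indicator hA
  have hreal : μ.real (A ∩ B) ≤ b * μ.real B := calc
    μ.real (A ∩ B) = ∫ ω in B, A.indicator (fun _ => (1:ℝ)) ω ∂μ := by
      rw [integral_indicator_const _ hA, measureReal_restrict_apply hA, smul_eq_mul, mul_one]
    _ = ∫ ω in B, (μ[A.indicator (fun _ => (1:ℝ)) | m]) ω ∂μ :=
      (setIntegral_condExp hm hint hB).symm
    _ ≤ ∫ _ in B, b ∂μ :=
      setIntegral_mono_ae integrable_condExp.integrableOn (integrable_const b) hb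
    _ = b * μ.real B := by rw [setIntegral_const, smul_eq_mul, mul_comm]
  rw [trim_measurableSet_eq hm hB, Measure.smul_apply, trim_measurableSet_eq hm hB,
    Measure.restrict_apply (hm B hB), smul_eq_mul, Set.inter_comm,
    ← ofReal_measureReal (measure_ne_top μ _), ← ofReal_measureReal (measure_ne_top μ B),
    ← ENNReal.ofReal_mul' measureReal_nonneg]
  exact ENNReal.ofReal_le_ofReal hreal

theorem setLIntegral_le_of_condExp_indicator_le [IsFiniteMeasure μ] (hm : m ≤ m0)
    {A : Set Ω} (hA : MeasurableSet A) {b : ℝ}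
    (hb : ∀ᵐ ω ∂μ, (μ[A.indicator (fun _ => (1:ℝ)) | m]) ω ≤ b)
    {f : Ω → ℝ≥0∞} (hf : Measurable[m] f) :
    ∫⁻ ω in A, f ω ∂μ ≤ ENNReal.ofReal b * ∫⁻ ω, f ω ∂μ := by
  rw [← lintegral_trim hm hf, ← lintegral_trim hm hf, ← smul_eq_mul,
    ← lintegral_smul_measure]
  exact lintegral_mono' (restrict_trim_le_smul_trim_of_condExp_indicator_le hm hA hb) le_rfl

theorem lintegral_mul_exp_le_of_condExp_tail_le [IsFiniteMeasure μ] (hm : m ≤ m0)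
    {X : Ω → ℕ} (hX : Measurable X) {d : ℕ} (hd : 0 < d) {p : ℝ} (hp : p ≤ 1)
    (htail : ∀ n : ℕ, ∀ᵐ ω ∂μ,
      (μ[{ω | n * d < X ω}.indicator (fun _ => (1:ℝ)) | m]) ω ≤ (1 - p) ^ n)
    {l : ℝ} (hl : 0 ≤ l) (hq : (1 - p) * Real.exp (l * d) < 1)
    {f : Ω → ℝ≥0∞} (hf : Measurable[m] f) :
    ∫⁻ ω, f ω * ENNReal.ofReal (Real.exp (l * X ω)) ∂μ ≤
      ENNReal.ofReal (p * Real.exp (l * d) / (1 - (1 - p) * Real.exp (l * d))) *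
        ∫⁻ ω, f ω ∂μ := by
  set r := Real.exp (l * d)
  set c : ℕ → ℝ≥0∞ := fun n => ENNReal.ofReal ((r - 1) * r ^ n)
  set A : ℕ → Set Ω := fun n => {ω | n * d < X ω}
  have hr : 1 ≤ r := Real.one_le_exp (by positivity)
  have hA : ∀ n, MeasurableSet (A n) := fun n => measurableSet_lt measurable_const hX
  have hf0 : Measurable f := hf.mono hm le_rfl
  have hpt : ∀ ω, f ω * ENNReal.ofReal (Real.exp (l * X ω)) ≤
      f ω + ∑' n, c n * (A n).indicator f ω := fun ω => calc
    _ ≤ f ω * (1 + ∑' n : ℕ, if n * d < X ω then c n else 0) := by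
        gcongr; exact ofReal_exp_mul_le_one_add_tsum hl hd (X ω)
    _ = _ := by
        rw [mul_add, mul_one, ← ENNReal.tsum_mul_left]
        congr 1
        refine tsum_congr fun n => ?_
        simp [A, Set.indicator_apply, mul_comm]
  calc ∫⁻ ω, f ω * ENNReal.ofReal (Real.exp (l * X ω)) ∂μ
      ≤ ∫⁻ ω, f ω + ∑' n, c n * (A n).indicator f ω ∂μ := lintegral_mono hpt
    _ = ∫⁻ ω, f ω ∂μ + ∑' n, c n * ∫⁻ ω in A n, f ω ∂μ := by
        rw [lintegral_add_left hf0, lintegral_tsum fun n =>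
          ((hf0.indicator (hA n)).const_mul _).aemeasurable]
        simp only [lintegral_const_mul _ (hf0.indicator (hA _)), lintegral_indicator (hA _)]
    _ ≤ ∫⁻ ω, f ω ∂μ + ∑' n, c n * (ENNReal.ofReal ((1 - p) ^ n) *
          ∫⁻ ω, f ω ∂μ) := by
        gcongr with n
        exact setLIntegral_le_of_condExp_indicator_le hm (hA n) (htail n) hf
    _ = ENNReal.ofReal (p * r / (1 - (1 - p) * r)) * ∫⁻ ω, f ω ∂μ := by
        simp only [← mul_assoc]
        rw [ENNReal.tsum_mul_right, ← one_add_tsum_ofReal_mul_pow_eq hr hp hq, add_mul,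
          one_mul]

theorem measure_lt_le_of_lintegral_exp_le {X : Ω → ℝ} (hX : Measurable X) {l : ℝ}
    (hl : 0 ≤ l) {c : ℝ} {M : ℝ≥0∞} (hM : ∫⁻ ω, ENNReal.ofReal (Real.exp (l * X ω)) ∂μ ≤ M) :
    μ {ω | c < X ω} ≤ ENNReal.ofReal (Real.exp (-(l * c))) * M := calc
  μ {ω | c < X ω}
      ≤ μ {ω | ENNReal.ofReal (Real.exp (l * c)) ≤ ENNReal.ofReal (Real.exp (l * X ω))} :=
    measure_mono (Set.ofPred_subset_ofPred.2 fun ω hω => by gcongr)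
  _ = ENNReal.ofReal (Real.exp (-(l * c))) * (ENNReal.ofReal (Real.exp (l * c)) *
        μ {ω | ENNReal.ofReal (Real.exp (l * c)) ≤ ENNReal.ofReal (Real.exp (l * X ω))}) := by
    rw [← mul_assoc, ← ENNReal.ofReal_mul (Real.exp_pos _).le, ← Real.exp_add, neg_add_cancel,
      Real.exp_zero, ENNReal.ofReal_one, one_mul]
  _ ≤ ENNReal.ofReal (Real.exp (-(l * c))) * M := by
    gcongr
    exact (mul_meas_ge_le_lintegral₀ (by fun_prop) _).trans hM

end MeasureTheory

section StoppingTimes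

variable {Ω : Type*} {m0 : MeasurableSpace Ω} {μ : Measure Ω} [IsProbabilityMeasure μ]
  {F : Filtration ℕ m0} {d : ℕ} {p : ℝ} {T : ℕ → Ω → ℕ}
  {hstop : ∀ k, IsStoppingTime F (fun ω => (T k ω : WithTop ℕ))}

theorem lintegral_exp_mul_le_pow (hT0 : ∀ ω, T 0 ω = 0) (hd : 0 < d) (hp : p ≤ 1)
    (hcond : ∀ k m : ℕ, ∀ᵐ ω ∂μ,
      (μ[Set.indicator {ω' | m * d < T (k + 1) ω' - T k ω'} (fun _ => (1:ℝ)) |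
        (hstop k).measurableSpace]) ω ≤ (1 - p) ^ m)
    {l : ℝ} (hl : 0 ≤ l) (hq : (1 - p) * Real.exp (l * d) < 1) (k : ℕ) :
    ∫⁻ ω, ENNReal.ofReal (Real.exp (l * T k ω)) ∂μ ≤
      ENNReal.ofReal (p * Real.exp (l * d) / (1 - (1 - p) * Real.exp (l * d))) ^ k := by
  have hT : ∀ k, Measurable[(hstop k).measurableSpace] (T k) := fun k =>
    (hstop k).measurable.untopD 0
  have hT' : ∀ k, Measurable (T k) := fun k => (hT k).mono (hstop k).measurableSpace_le le_rfl
  induction k with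
  | zero => simp [hT0]
  | succ k ih =>
    calc ∫⁻ ω, ENNReal.ofReal (Real.exp (l * T (k + 1) ω)) ∂μ
        ≤ ∫⁻ ω, ENNReal.ofReal (Real.exp (l * T k ω)) *
            ENNReal.ofReal (Real.exp (l * (T (k + 1) ω - T k ω : ℕ))) ∂μ := by
          refine lintegral_mono fun ω => ?_
          rw [← ENNReal.ofReal_mul (Real.exp_pos _).le, ← Real.exp_add, ← mul_add]
          gcongr
          exact_mod_cast le_add_tsub
      _ ≤ _ * ∫⁻ ω, ENNReal.ofReal (Real.exp (l * T k ω)) ∂μ :=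
          lintegral_mul_exp_le_of_condExp_tail_le (hstop k).measurableSpace_le
            ((hT' (k + 1)).sub (hT' k)) hd hp (hcond k) hl hq
            ((measurable_of_countable fun n : ℕ => ENNReal.ofReal (Real.exp (l * n))).comp (hT k))
      _ ≤ _ := by rw [pow_succ']; gcongr

theorem ae_eventually_le_mul (hT0 : ∀ ω, T 0 ω = 0) (hd : 0 < d) (hp : p ∈ Set.Ioo (0:ℝ) 1)
    (hcond : ∀ k m : ℕ, ∀ᵐ ω ∂μ,
      (μ[Set.indicator {ω' | m * d < T (k + 1) ω' - T k ω'} (fun _ => (1:ℝ)) |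
        (hstop k).measurableSpace]) ω ≤ (1 - p) ^ m)
    {a : ℝ} (ha : d / p < a) :
    ∀ᵐ ω ∂μ, ∀ᶠ k in atTop, (T k ω : ℝ) ≤ a * k := by
  obtain ⟨hp0, hp1⟩ := hp
  obtain ⟨l, hl, hlt⟩ :=
    exists_pos_mul_exp_add_mul_exp_lt_one (by rwa [div_lt_iff₀' hp0] at ha)
  set r := Real.exp (l * d)
  have hq : (1 - p) * r < 1 := by nlinarith [Real.exp_pos (l * (d - a))]
  set ρ := Real.exp (-(l * a)) * (p * r / (1 - (1 - p) * r))
  have hρ : ρ < 1 := by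
    rw [show ρ = _ from mul_div_assoc' .., div_lt_one (by linarith)]
    calc Real.exp (-(l * a)) * (p * r) = p * Real.exp (l * (d - a)) := by
          rw [mul_sub, sub_eq_neg_add, Real.exp_add]; ring
      _ < 1 - (1 - p) * r := by linarith
  have hT : ∀ k, Measurable (T k) := fun k =>
    ((hstop k).measurable.untopD 0).mono (hstop k).measurableSpace_le le_rfl
  have htail : ∀ k : ℕ, μ {ω | a * k < T k ω} ≤ ENNReal.ofReal ρ ^ k := fun k => calc
    _ ≤ ENNReal.ofReal (Real.exp (-(l * (a * k)))) *
          ENNReal.ofReal (p * r / (1 - (1 - p) * r)) ^ k :=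
        measure_lt_le_of_lintegral_exp_le (measurable_from_top.comp (hT k)) hl.le
          (lintegral_exp_mul_le_pow hT0 hd hp1.le hcond hl.le hq k)
    _ = ENNReal.ofReal ρ ^ k := by
        rw [← ENNReal.ofReal_pow (by positivity), ← ENNReal.ofReal_mul (by positivity),
          ← ENNReal.ofReal_pow (by positivity), mul_pow, ← Real.exp_nat_mul]
        ring_nf
  have hsum : ∑' k, μ {ω | a * k < T k ω} ≠ ⊤ :=
    ne_top_of_le_ne_top (tsum_geometric_lt_top.2 (ENNReal.ofReal_lt_one.2 hρ)).ne
      (ENNReal.tsum_le_tsum htail)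
  filter_upwards [ae_eventually_notMem hsum] with ω hω
  exact hω.mono fun k hk => not_lt.1 hk

end StoppingTimes

/-- if `T 0 = 0` and the return-time increments satisfy the conditional
geometric tail bound `P(T_{k+1} - T_k > m d | F_{T_k}) ≤ (1-p)^m`, then almost surely
`limsup T_k / k ≤ d / p`; in particular a.s. there is a finite `C_T` with
`T_k ≤ C_T k` for all `k`. -/
theorem stmt_13 {Ω : Type*} {m0 : MeasurableSpace Ω} {μ : Measure Ω}
    [IsProbabilityMeasure μ] (F : Filtration ℕ m0)
    (d : ℕ) (hd : 1 ≤ d) (p : ℝ) (hp : p ∈ Set.Ioo (0:ℝ) 1)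
    (T : ℕ → Ω → ℕ) (hT0 : ∀ ω, T 0 ω = 0)
    (hstop : ∀ k, IsStoppingTime F (fun ω => (T k ω : WithTop ℕ)))
    (hcond : ∀ k m : ℕ, ∀ᵐ ω ∂μ,
      (μ[Set.indicator {ω' | m * d < T (k + 1) ω' - T k ω'} (fun _ => (1:ℝ)) |
        (hstop k).measurableSpace]) ω ≤ (1 - p) ^ m) :
    ∀ᵐ ω ∂μ,
      (Filter.atTop.limsup (fun k : ℕ => (T k ω : ℝ) / k) ≤ d / p) ∧
      ∃ C : ℝ, ∀ k : ℕ, (T k ω : ℝ) ≤ C * k := by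
  have hbound : ∀ n : ℕ, ∀ᵐ ω ∂μ,
      ∀ᶠ k in atTop, (T k ω : ℝ) ≤ (d / p + 1 / (n + 1)) * k :=
    fun n => ae_eventually_le_mul hT0 hd hp hcond (lt_add_of_pos_right _ Nat.one_div_pos_of_nat)
  filter_upwards [ae_all_iff.2 hbound] with ω hω
  have hgt : ∀ a, d / p < a → ∀ᶠ k in atTop, (T k ω : ℝ) ≤ a * k := fun a ha => by
    obtain ⟨n, hn⟩ := exists_nat_one_div_lt (sub_pos.2 ha)
    exact (hω n).mono fun k hk => hk.trans (by gcongr; linarith)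
  exact ⟨limsup_div_le_of_forall_lt_eventually_le (fun k => (T k ω).cast_nonneg) hgt,
    exists_forall_le_mul_of_eventually_le (by simp [hT0]) (hω 0)⟩
end

section
/- Suppose a sequence of positive reals satisfies u_{T_k} ≥ u_{T_{k-1}}·(1 + γ/(S_0 + γ·C_T·k)) for all k ≥ 1, with u_{T_0} = u_0 > 0, γ > 0, S_0 > 0 and C_T > 0. Then there exists c > 0 such that u_{T_k} ≥ c·(k+1)^{1/C_T} for all k ∈ ℕ. -/
/-!
Writing `p = 1 / C_T` and `d = S₀ / (γ C_T)`, the growth factor of the recurrence is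
`1 + p / (k + d)`. The power sequence `(k + d + p) ^ p` grows no faster than that: with
`B = k + d + p`, `(1 + 1/B) ^ p ≤ exp (p / B) ≤ 1 / (1 - p / B) = 1 + p / (k + d)`.
So a small multiple of it stays below `v` by induction, and it dominates `(k + 1) ^ p`.
-/

open Real

lemma one_add_rpow_le_exp_mul {x p : ℝ} (hx : -1 < x) (hp : 0 ≤ p) :
    (1 + x) ^ p ≤ exp (p * x) := by
  rw [rpow_def_of_pos (by linarith), exp_le_exp, mul_comm p]
  have hlog : log (1 + x) ≤ x := by linarith [log_le_sub_one_of_pos (x := 1 + x) (by linarith)]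
  exact mul_le_mul_of_nonneg_right hlog hp

lemma add_add_one_rpow_le_rpow_mul {y p : ℝ} (hy : 0 < y) (hp : 0 ≤ p) :
    (y + p + 1) ^ p ≤ (y + p) ^ p * (1 + p / y) := by
  have hB : 0 < y + p := by linarith
  have hlt : p / (y + p) < 1 := (div_lt_one hB).2 (by linarith)
  calc (y + p + 1) ^ p = (y + p) ^ p * (1 + 1 / (y + p)) ^ p := by
        rw [← mul_rpow hB.le (by positivity)]
        congr 1
        field_simp
    _ ≤ (y + p) ^ p * exp (p / (y + p)) := by
        gcongr
        simpa [div_eq_mul_inv] using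
          one_add_rpow_le_exp_mul (x := 1 / (y + p)) (by linarith [one_div_pos.2 hB]) hp
    _ ≤ (y + p) ^ p * (1 / (1 - p / (y + p))) := by
        gcongr
        exact exp_bound_div_one_sub_of_interval (by positivity) hlt
    _ = (y + p) ^ p * (1 + p / y) := by
        congr 1
        field_simp [hy.ne']
        ring

lemma le_of_le_mul_of_mul_le {f g r : ℕ → ℝ} (h0 : f 0 ≤ g 0) (hr : ∀ k, 0 ≤ r k)
    (hf : ∀ k, f (k + 1) ≤ f k * r k) (hg : ∀ k, g k * r k ≤ g (k + 1)) (k : ℕ) :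
    f k ≤ g k := by
  induction k with
  | zero => exact h0
  | succ k ih => exact (hf k).trans ((mul_le_mul_of_nonneg_right ih (hr k)).trans (hg k))

/-- if `v 0 > 0` and `v k ≥ v (k-1) * (1 + γ / (S₀ + γ C_T k))` for
`k ≥ 1`, then there exists `c > 0` with `v k ≥ c * (k+1)^(1/C_T)` for all `k`. -/
theorem stmt_15 (γ S₀ CT : ℝ) (hγ : 0 < γ) (hS₀ : 0 < S₀) (hCT : 0 < CT)
    (v : ℕ → ℝ) (hv0 : 0 < v 0)
    (hrec : ∀ k : ℕ, v (k + 1) ≥ v k * (1 + γ / (S₀ + γ * CT * (k + 1)))) :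
    ∃ c : ℝ, 0 < c ∧ ∀ k : ℕ, c * ((k : ℝ) + 1) ^ (1 / CT) ≤ v k := by
  set p := 1 / CT
  set d := S₀ / (γ * CT)
  have hp : 0 < p := by positivity
  have hd : 0 < d := by positivity
  have hfactor (k : ℕ) : γ / (S₀ + γ * CT * (k + 1)) = p / (k + 1 + d) := by
    simp only [p, d]
    field_simp
    ring
  set c := v 0 / (1 + d + p) ^ p
  refine ⟨c, by positivity, fun k => ?_⟩
  have hdom : ∀ k : ℕ, c * ((k : ℝ) + 1 + d + p) ^ p ≤ v k := by
    refine le_of_le_mul_of_mul_le (r := fun k : ℕ => 1 + p / (k + 1 + d)) ?_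
      (fun k => by positivity) (fun k => ?_) (fun k => by simpa [hfactor] using hrec k)
    · simp [c, div_mul_cancel₀ _ (by positivity : (1 + d + p) ^ p ≠ 0)]
    · rw [show ((k + 1 : ℕ) : ℝ) + 1 + d + p = (k : ℝ) + 1 + d + p + 1 by push_cast; ring,
        mul_assoc]
      exact mul_le_mul_of_nonneg_left
        (add_add_one_rpow_le_rpow_mul (y := (k : ℝ) + 1 + d) (by positivity) hp.le) (by positivity)
  calc c * ((k : ℝ) + 1) ^ p ≤ c * ((k : ℝ) + 1 + d + p) ^ p := by gcongr c * ?_ ^ p; linarith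
    _ ≤ v k := hdom k
end

section
/- Let 1/2 < α < 1, γ > 0 and l_0 > 0, and suppose a positive sequence (l_n) satisfies l_{n+1} ≤ l_n·(1 + γ/l_n)^{1/(1−α)} and is nondecreasing. Then l_n ≤ l_0·(1 ∨ ((1+γ/l_0)^{1/(1−α)} − 1))·(n+1) for all n. -/
/-- Convexity step: for `0 ≤ t ≤ 1`, `0 ≤ x`, `1 ≤ p`:
`(1 + t*x)^p ≤ 1 + t*((1+x)^p - 1)`. -/
lemma aux_convex (t x p : ℝ) (ht0 : 0 ≤ t) (ht1 : t ≤ 1) (hx : 0 ≤ x) (hp : 1 ≤ p) :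
    (1 + t * x) ^ p ≤ 1 + t * ((1 + x) ^ p - 1) := by
  have hc := (convexOn_rpow hp).2 (Set.mem_Ici.mpr (zero_le_one (α := ℝ)))
    (Set.mem_Ici.mpr (by linarith : (0:ℝ) ≤ 1 + x)) (by linarith : (0:ℝ) ≤ 1 - t) ht0
    (by ring : 1 - t + t = 1)
  have h1 : (1 - t) • (1:ℝ) + t • (1 + x) = 1 + t * x := by simp; ring
  rw [h1] at hc
  calc (1 + t * x) ^ p ≤ (1 - t) • ((1:ℝ) ^ p) + t • ((1 + x) ^ p) := hc
    _ = 1 + t * ((1 + x) ^ p - 1) := by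
        rw [Real.one_rpow]; simp; ring

/-- if `1/2 < α < 1`, `γ > 0`, `l 0 > 0` and the positive nondecreasing
sequence `l` satisfies `l (n+1) ≤ l n * (1 + γ / l n)^(1/(1-α))`, then
`l n ≤ l 0 * max 1 ((1 + γ / l 0)^(1/(1-α)) - 1) * (n+1)`. -/
theorem stmt_16 (α γ : ℝ) (hα : α ∈ Set.Ioo (1/2 : ℝ) 1) (hγ : 0 < γ)
    (l : ℕ → ℝ) (hlpos : ∀ n, 0 < l n) (hlmono : Monotone l)
    (hrec : ∀ n : ℕ, l (n + 1) ≤ l n * (1 + γ / l n) ^ (1 / (1 - α) : ℝ)) :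
    ∀ n : ℕ, l n ≤ l 0 * max 1 ((1 + γ / l 0) ^ (1 / (1 - α) : ℝ) - 1) * ((n : ℝ) + 1) := by
  obtain ⟨hα1, hα2⟩ := hα
  set p : ℝ := 1 / (1 - α) with hp
  have hp1 : 1 ≤ p := by
    rw [hp, le_div_iff₀ (by linarith)]; linarith
  set M : ℝ := max 1 ((1 + γ / l 0) ^ p - 1) with hM
  have hM1 : (1:ℝ) ≤ M := le_max_left _ _
  have hl0 : 0 < l 0 := hlpos 0
  -- key step
  have key : ∀ n, l (n + 1) ≤ l n + l 0 * ((1 + γ / l 0) ^ p - 1) := by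
    intro n
    have hln : 0 < l n := hlpos n
    have hle : l 0 ≤ l n := hlmono (Nat.zero_le n)
    set t : ℝ := l 0 / l n with htdef
    have ht0 : 0 ≤ t := by positivity
    have ht1 : t ≤ 1 := by rw [htdef, div_le_one hln]; exact hle
    have hx : 0 ≤ γ / l 0 := by positivity
    have hγn : γ / l n = t * (γ / l 0) := by
      rw [htdef]; field_simp
    have hcv := aux_convex t (γ / l 0) p ht0 ht1 hx hp1
    calc l (n + 1) ≤ l n * (1 + γ / l n) ^ p := hrec n
      _ = l n * (1 + t * (γ / l 0)) ^ p := by rw [hγn]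
      _ ≤ l n * (1 + t * ((1 + γ / l 0) ^ p - 1)) := by
          apply mul_le_mul_of_nonneg_left hcv hln.le
      _ = l n + l 0 * ((1 + γ / l 0) ^ p - 1) := by
          have hnt : l n * t = l 0 := by rw [htdef]; field_simp
          linear_combination ((1 + γ / l 0) ^ p - 1) * hnt
  intro n
  induction n with
  | zero => simpa using le_mul_of_one_le_right hl0.le hM1
  | succ n ih =>
    have h2 : l 0 * ((1 + γ / l 0) ^ p - 1) ≤ l 0 * M :=
      mul_le_mul_of_nonneg_left (le_max_right _ _) hl0.le
    have := key n
    push_cast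
    nlinarith [hl0, hM1]
end
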